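/- Let V be a real vector space of dimension 2n with a scalar product ⟨·,·⟩, J : V → V a skew-symmetric isomorphism with J² = -Id, and D : V → V an endomorphism with [J,D] = 0 and D + Dᵗ = -2·Id (Dᵗ the adjoint with respect to ⟨·,·⟩). Then there exist λ₁,…,λₙ ∈ ℝ and an orthonormal basis (e₁, Je₁, …, eₙ, Jeₙ) of V such that for each j, D eⱼ = -eⱼ - λⱼ J eⱼ and D(Jeⱼ) = -Jeⱼ + λⱼ eⱼ. -/

import Mathlib

/-!
`A = D + id` is skew-adjoint and commutes with `J`, so `B = J A` is symmetric and commutes with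
`J`. A unit eigenvector `e` of `B`, say `B e = λ e`, spans together with `J e` an orthonormal plane
invariant under `J` and `B`; hence so is its orthogonal complement, and induction on the dimension
gives an orthonormal basis `(eⱼ, J eⱼ)` of eigenvectors. Finally `B e = λ e` is equivalent to
`A e = -λ J e`, i.e. `D e = -e - λ J e`.
-/

open scoped RealInnerProductSpace
open Module

section Orthonormal

variable {𝕜 V : Type*} [RCLike 𝕜] [NormedAddCommGroup V] [InnerProductSpace 𝕜 V]

theorem orthonormal_fin_cons {m : ℕ} {v : V} {e : Fin m → V} (hv : ‖v‖ = 1)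
    (hve : ∀ i, inner 𝕜 v (e i) = 0) (he : Orthonormal 𝕜 e) :
    Orthonormal 𝕜 (Fin.cons v e : Fin (m + 1) → V) := by
  rw [orthonormal_iff_ite] at he ⊢
  intro i j
  induction i using Fin.cases <;> induction j using Fin.cases <;>
    simp [hv, hve, inner_eq_zero_symm.mp (hve _), he, Fin.succ_ne_zero, (Fin.succ_ne_zero _).symm]

theorem Submodule.mapsTo_orthogonal {S : Submodule 𝕜 V} {T T' : V →ₗ[𝕜] V}
    (hTT' : ∀ x y, inner 𝕜 (T x) y = inner 𝕜 x (T' y)) (hS : Set.MapsTo T' S S) :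
    Set.MapsTo T Sᗮ Sᗮ := by
  intro x hx
  refine (Submodule.mem_orthogonal' S (T x)).mpr fun u hu => ?_
  rw [hTT']
  exact Submodule.inner_left_of_mem_orthogonal (hS hu) hx

end Orthonormal

section ComplexStructure

variable {V : Type*} [NormedAddCommGroup V] [InnerProductSpace ℝ V] {J : V →ₗ[ℝ] V}

theorem inner_self_map_eq_zero_of_skew (hJ : ∀ x y, ⟪J x, y⟫ = -⟪x, J y⟫) (x : V) :
    ⟪x, J x⟫ = 0 := by
  have := hJ x x
  rw [real_inner_comm] at this
  linarith

theorem norm_map_of_skew (hJ : ∀ x y, ⟪J x, y⟫ = -⟪x, J y⟫) (hJJ : ∀ x, J (J x) = -x)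
    (x : V) : ‖J x‖ = ‖x‖ := by
  have h := hJ x (J x)
  rw [hJJ, inner_neg_right, neg_neg, real_inner_self_eq_norm_sq, real_inner_self_eq_norm_sq] at h
  exact (pow_left_inj₀ (norm_nonneg _) (norm_nonneg _) two_ne_zero).mp h

theorem orthonormal_sum_elim_comp_iff (hJ : ∀ x y, ⟪J x, y⟫ = -⟪x, J y⟫)
    (hJJ : ∀ x, J (J x) = -x) {ι : Type*} {e : ι → V} :
    Orthonormal ℝ (Sum.elim e (J ∘ e)) ↔ Orthonormal ℝ e ∧ ∀ i j, ⟪e i, J (e j)⟫ = 0 := by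
  classical
  refine ⟨fun h => ⟨h.comp _ Sum.inl_injective, fun i j => h.2 Sum.inl_ne_inr⟩, ?_⟩
  rintro ⟨he, hJe⟩
  rw [orthonormal_iff_ite] at he ⊢
  rintro (i | i) (j | j) <;>
    simp [he, hJe, hJ, hJJ]

theorem LinearMap.IsSymmetric.exists_unit_eigenvector_mem {B : V →ₗ[ℝ] V} (hB : B.IsSymmetric)
    {W : Submodule ℝ V} [FiniteDimensional ℝ W] [Nontrivial W] (hBW : ∀ x ∈ W, B x ∈ W) :
    ∃ v ∈ W, ‖v‖ = 1 ∧ ∃ μ : ℝ, B v = μ • v := by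
  obtain ⟨μ, hμ⟩ : ∃ μ : ℝ, Module.End.HasEigenvalue (B.restrict hBW) μ :=
    ⟨_, (hB.restrict_invariant hBW).hasEigenvalue_iSup_of_finiteDimensional⟩
  obtain ⟨w, hw⟩ := hμ.exists_hasEigenvector
  refine ⟨‖(w : V)‖⁻¹ • (w : V), W.smul_mem _ w.2, norm_smul_inv_norm (by simpa using hw.2), μ,
    ?_⟩
  rw [map_smul, smul_comm]
  exact congrArg (‖(w : V)‖⁻¹ • ·) (congrArg Subtype.val hw.apply_eq_smul)

theorem orthonormal_pair_of_skew (hJ : ∀ x y, ⟪J x, y⟫ = -⟪x, J y⟫) (hJJ : ∀ x, J (J x) = -x)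
    {v : V} (hv : ‖v‖ = 1) : Orthonormal ℝ ![v, J v] := by
  rw [orthonormal_iff_ite]
  simp [Fin.forall_fin_two, hv, norm_map_of_skew hJ hJJ, inner_self_map_eq_zero_of_skew hJ,
    real_inner_comm v (J v)]

variable (J) in
def complexLine (v : V) : Submodule ℝ V :=
  Submodule.span ℝ (Set.range ![v, J v])

theorem mem_complexLine_self (v : V) : v ∈ complexLine J v :=
  Submodule.subset_span ⟨0, rfl⟩

theorem map_mem_complexLine (v : V) : J v ∈ complexLine J v :=
  Submodule.subset_span ⟨1, rfl⟩

theorem complexLine_le {v : V} {W : Submodule ℝ V} (hv : v ∈ W) (hJv : J v ∈ W) :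
    complexLine J v ≤ W :=
  Submodule.span_le.mpr <| by
    rintro _ ⟨i, rfl⟩
    fin_cases i
    exacts [hv, hJv]

theorem mapsTo_complexLine {v : V} {T : V →ₗ[ℝ] V} (h₀ : T v ∈ complexLine J v)
    (h₁ : T (J v) ∈ complexLine J v) : Set.MapsTo T (complexLine J v) (complexLine J v) :=
  fun _ hx => complexLine_le (W := (complexLine J v).comap T) h₀ h₁ hx

theorem mapsTo_orthogonal_complexLine_of_skew (hJ : ∀ x y, ⟪J x, y⟫ = -⟪x, J y⟫)
    (hJJ : ∀ x, J (J x) = -x) (v : V) :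
    Set.MapsTo J (complexLine J v)ᗮ (complexLine J v)ᗮ :=
  Submodule.mapsTo_orthogonal (T' := -J) (by simpa using hJ) <|
    mapsTo_complexLine (by simpa using map_mem_complexLine v)
      (by simpa [hJJ] using mem_complexLine_self v)

theorem LinearMap.IsSymmetric.mapsTo_orthogonal_complexLine {B : V →ₗ[ℝ] V} (hB : B.IsSymmetric)
    (hBJ : ∀ x, B (J x) = J (B x)) {v : V} {μ : ℝ} (hBv : B v = μ • v) :
    Set.MapsTo B (complexLine J v)ᗮ (complexLine J v)ᗮ :=
  Submodule.mapsTo_orthogonal hB <|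
    mapsTo_complexLine (by simpa [hBv] using (complexLine J v).smul_mem μ (mem_complexLine_self v))
      (by simpa [hBJ, hBv] using (complexLine J v).smul_mem μ (map_mem_complexLine v))

theorem exists_orthonormal_sum_elim_eigenvectors [FiniteDimensional ℝ V]
    (hJ : ∀ x y, ⟪J x, y⟫ = -⟪x, J y⟫) (hJJ : ∀ x, J (J x) = -x) {B : V →ₗ[ℝ] V}
    (hB : B.IsSymmetric) (hBJ : ∀ x, B (J x) = J (B x)) (m : ℕ) {W : Submodule ℝ V}
    (hJW : ∀ x ∈ W, J x ∈ W) (hBW : ∀ x ∈ W, B x ∈ W) (hW : finrank ℝ W = 2 * m) :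
    ∃ (e : Fin m → V) (μ : Fin m → ℝ),
      (∀ i, e i ∈ W) ∧ Orthonormal ℝ (Sum.elim e (J ∘ e)) ∧ ∀ i, B (e i) = μ i • e i := by
  induction m generalizing W with
  | zero =>
    refine ⟨Fin.elim0, Fin.elim0, Fin.rec0, ?_, Fin.rec0⟩
    rw [orthonormal_iff_ite]
    rintro (i | i) <;> exact i.elim0
  | succ m ih =>
    have : Nontrivial W := Module.finrank_pos_iff.mp (by rw [hW]; omega)
    obtain ⟨v, hvW, hv1, μ, hBv⟩ := hB.exists_unit_eigenvector_mem hBW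
    set S := complexLine J v
    have hW' : finrank ℝ ↥(Sᗮ ⊓ W) = 2 * m :=
      Submodule.finrank_add_inf_finrank_orthogonal' (complexLine_le hvW (hJW v hvW)) <| by
        rw [complexLine,
          finrank_span_eq_card (orthonormal_pair_of_skew hJ hJJ hv1).linearIndependent, hW,
          Fintype.card_fin]
        ring
    have hJW' : ∀ x ∈ Sᗮ ⊓ W, J x ∈ Sᗮ ⊓ W := fun x hx =>
      ⟨mapsTo_orthogonal_complexLine_of_skew hJ hJJ v hx.1, hJW x hx.2⟩
    have hBW' : ∀ x ∈ Sᗮ ⊓ W, B x ∈ Sᗮ ⊓ W := fun x hx =>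
      ⟨hB.mapsTo_orthogonal_complexLine hBJ hBv hx.1, hBW x hx.2⟩
    obtain ⟨e, μs, heW, heo, hBe⟩ := ih hJW' hBW' hW'
    rw [orthonormal_sum_elim_comp_iff hJ hJJ] at heo
    have hvS : v ∈ S := mem_complexLine_self v
    refine ⟨Fin.cons v e, Fin.cons μ μs, fun i => ?_,
      (orthonormal_sum_elim_comp_iff hJ hJJ).mpr ⟨orthonormal_fin_cons hv1
      (fun i => Submodule.inner_right_of_mem_orthogonal hvS (heW i).1) heo.1, fun i j => ?_⟩,
      fun i => ?_⟩
    · induction i using Fin.cases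
      exacts [hvW, (heW _).2]
    · induction i using Fin.cases <;> induction j using Fin.cases <;>
        simp only [Fin.cons_zero, Fin.cons_succ]
      · exact inner_self_map_eq_zero_of_skew hJ v
      · exact Submodule.inner_right_of_mem_orthogonal hvS (hJW' _ (heW _)).1
      · exact Submodule.inner_left_of_mem_orthogonal (map_mem_complexLine v) (heW _).1
      · exact heo.2 _ _
    · induction i using Fin.cases
      exacts [hBv, hBe _]

theorem isSymmetric_comp_add_id [FiniteDimensional ℝ V] (hJ : ∀ x y, ⟪J x, y⟫ = -⟪x, J y⟫)
    {D : V →ₗ[ℝ] V} (hJD : J ∘ₗ D = D ∘ₗ J)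
    (hD : D + LinearMap.adjoint D = -(2 : ℝ) • LinearMap.id) :
    (J ∘ₗ (D + LinearMap.id)).IsSymmetric := by
  have hA (x y : V) : ⟪D x + x, y⟫ = -⟪x, D y + y⟫ := by
    have hadj : LinearMap.adjoint D y = -(2 : ℝ) • y - D y :=
      eq_sub_of_add_eq' (LinearMap.congr_fun hD y)
    rw [inner_add_left, ← LinearMap.adjoint_inner_right, hadj]
    simp only [inner_sub_right, inner_add_right, inner_smul_right]
    ring
  intro x y
  simp only [LinearMap.comp_apply, LinearMap.add_apply, LinearMap.id_apply]
  rw [hJ, hA, neg_neg, map_add, ← LinearMap.comp_apply J D, hJD, LinearMap.comp_apply]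

end ComplexStructure

theorem stmt0_general (n : ℕ) (V : Type*) [NormedAddCommGroup V] [InnerProductSpace ℝ V]
    [FiniteDimensional ℝ V] (hdim : Module.finrank ℝ V = 2 * n)
    (J D : V →ₗ[ℝ] V)
    (hJskew : LinearMap.adjoint J = -J)
    (hJ2 : J ∘ₗ J = -LinearMap.id)
    (hJD : J ∘ₗ D = D ∘ₗ J)
    (hD : D + LinearMap.adjoint D = -(2 : ℝ) • LinearMap.id) :
    ∃ (lam : Fin n → ℝ) (b : Module.Basis (Fin n ⊕ Fin n) ℝ V),
      Orthonormal ℝ b ∧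
      (∀ j : Fin n, b (Sum.inr j) = J (b (Sum.inl j))) ∧
      (∀ j : Fin n, D (b (Sum.inl j)) = -b (Sum.inl j) - lam j • J (b (Sum.inl j))) ∧
      (∀ j : Fin n, D (J (b (Sum.inl j))) = -J (b (Sum.inl j)) + lam j • b (Sum.inl j)) := by
  have hJ (x y : V) : ⟪J x, y⟫ = -⟪x, J y⟫ := by
    rw [← LinearMap.adjoint_inner_right, hJskew, LinearMap.neg_apply, inner_neg_right]
  have hJJ (x : V) : J (J x) = -x := LinearMap.congr_fun hJ2 x
  have hJD' (x : V) : J (D x) = D (J x) := LinearMap.congr_fun hJD x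
  set B := J ∘ₗ (D + LinearMap.id)
  have hB : B.IsSymmetric := isSymmetric_comp_add_id hJ hJD hD
  have hBJ (x : V) : B (J x) = J (B x) := by
    simp [B, hJD']
  obtain ⟨e, lam, -, he, hBe⟩ := exists_orthonormal_sum_elim_eigenvectors hJ hJJ hB hBJ n
    (W := ⊤) (fun _ _ => trivial) (fun _ _ => trivial) (by rw [finrank_top, hdim])
  have hDe (j : Fin n) : D (e j) = -e j - lam j • J (e j) := by
    have h := congrArg J (hBe j)
    simp only [B, LinearMap.comp_apply, LinearMap.add_apply, LinearMap.id_apply, hJJ,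
      map_smul] at h
    linear_combination (norm := module) -h
  refine ⟨lam, basisOfLinearIndependentOfCardEqFinrank' _ he.linearIndependent
    (by simp [hdim]; ring), by simpa using he, fun j => by simp, fun j => by simpa using hDe j,
    fun j => ?_⟩
  simp only [coe_basisOfLinearIndependentOfCardEqFinrank', Sum.elim_inl]
  rw [← hJD', hDe, map_sub, map_neg, map_smul, hJJ]
  module

/-- If `V` is a real inner product space of dimension `2n`, `J` a skew-symmetric
isomorphism with `J² = -Id`, and `D` an endomorphism with `[J,D] = 0` and `D + Dᵗ = -2·Id`,
then there exist `λ₁,…,λₙ` and an orthonormal basis `(e₁, Je₁, …, eₙ, Jeₙ)` with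
`D eⱼ = -eⱼ - λⱼ Jeⱼ` and `D (Jeⱼ) = -Jeⱼ + λⱼ eⱼ`. -/
theorem stmt0 (n : ℕ) (V : Type*) [NormedAddCommGroup V] [InnerProductSpace ℝ V]
    [FiniteDimensional ℝ V] (hdim : Module.finrank ℝ V = 2 * n)
    (J D : V →ₗ[ℝ] V)
    (hJskew : LinearMap.adjoint J = -J)
    (hJ2 : J ∘ₗ J = -LinearMap.id)
    (hJbij : Function.Bijective J)
    (hJD : J ∘ₗ D = D ∘ₗ J)
    (hD : D + LinearMap.adjoint D = -(2 : ℝ) • LinearMap.id) :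
    ∃ (lam : Fin n → ℝ) (b : Module.Basis (Fin n ⊕ Fin n) ℝ V),
      Orthonormal ℝ b ∧
      (∀ j : Fin n, b (Sum.inr j) = J (b (Sum.inl j))) ∧
      (∀ j : Fin n, D (b (Sum.inl j)) = -b (Sum.inl j) - lam j • J (b (Sum.inl j))) ∧
      (∀ j : Fin n, D (J (b (Sum.inl j))) = -J (b (Sum.inl j)) + lam j • b (Sum.inl j)) :=
  stmt0_general n V hdim J D hJskew hJ2 hJD hD
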